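/- arXiv:1605.08161 — 2 statements merged into one kernel-verified Lean document; each statement's English description precedes it below -/
import Mathlib

section
/- Let d ≥ 2, α < 0, and 0 < R₁ < R₂. The first Robin eigenvalue of the spherical shell A_{R₁,R₂} in ℝ^d satisfies λ₁^α(A_{R₁,R₂}) < −α² + ((d−1)/R₂)·α. -/
/-!
Test the Rayleigh quotient with `φ(r) = e^{α(R₂ - r)}`. Since `φ' = -αφ`, the gradient term is
`α²` times the weighted mass `D = ∫ φ² r^{d-1}`. Differentiating `φ² r^{d-1}` and using
`(d-1) r^{d-2} ≥ (d-1) r^{d-1} / R₂` gives `((d-1)/R₂ - 2α) D ≤ R₂^{d-1} - R₁^{d-1} φ(R₁)²`;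
multiplied by `α < 0` this bounds the outer boundary term, and the inner boundary term
`α R₁^{d-1} φ(R₁)² < 0` makes the inequality strict.

The quotients are bounded below (via the trace inequality
`φ(x)² ≤ (1/(b-a) + 1/ε) ∫ φ² + ε ∫ φ'²`), so `lam1Shell` is a genuine infimum rather than the
junk value `sInf` takes on sets unbounded below.
-/

open MeasureTheory intervalIntegral

/-- The first Robin eigenvalue of the spherical shell `A_{R₁,R₂} ⊂ ℝ^d`, given by the
radial Rayleigh quotient
`(∫_{R₁}^{R₂} φ'(r)² r^{d-1} dr + α R₁^{d-1} φ(R₁)² + α R₂^{d-1} φ(R₂)²) /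
  ∫_{R₁}^{R₂} φ(r)² r^{d-1} dr`
over nonzero `C¹` functions `φ` on `[R₁,R₂]`. -/
noncomputable def lam1Shell (d : ℕ) (R₁ R₂ α : ℝ) : ℝ :=
  sInf { q : ℝ | ∃ φ : ℝ → ℝ, ContDiff ℝ 1 φ ∧
    (∫ r in R₁..R₂, (φ r) ^ 2 * r ^ (d - 1)) ≠ 0 ∧
    q = ((∫ r in R₁..R₂, (deriv φ r) ^ 2 * r ^ (d - 1))
          + α * R₁ ^ (d - 1) * (φ R₁) ^ 2 + α * R₂ ^ (d - 1) * (φ R₂) ^ 2) /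
        (∫ r in R₁..R₂, (φ r) ^ 2 * r ^ (d - 1)) }

open Set Real
open scoped Interval

noncomputable def weightedMass (k : ℕ) (a b : ℝ) (φ : ℝ → ℝ) : ℝ :=
  ∫ r in a..b, φ r ^ 2 * r ^ k

noncomputable def robinEnergy (k : ℕ) (a b α : ℝ) (φ : ℝ → ℝ) : ℝ :=
  weightedMass k a b (deriv φ) + α * a ^ k * φ a ^ 2 + α * b ^ k * φ b ^ 2

def robinQuotients (k : ℕ) (a b α : ℝ) : Set ℝ :=
  {q | ∃ φ : ℝ → ℝ, ContDiff ℝ 1 φ ∧ weightedMass k a b φ ≠ 0 ∧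
    q = robinEnergy k a b α φ / weightedMass k a b φ}

theorem lam1Shell_eq_sInf_robinQuotients (d : ℕ) (R₁ R₂ α : ℝ) :
    lam1Shell d R₁ R₂ α = sInf (robinQuotients (d - 1) R₁ R₂ α) := rfl

theorem abs_two_mul_mul_le_div_add_mul {ε : ℝ} (hε : 0 < ε) (u v : ℝ) :
    |2 * u * v| ≤ u ^ 2 / ε + ε * v ^ 2 := by
  have key : u ^ 2 / ε + ε * v ^ 2 - |2 * u * v| = (|u| - ε * |v|) ^ 2 / ε := by
    rw [abs_mul, abs_mul, abs_two]
    field_simp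
    rw [← sq_abs u, ← sq_abs v]
    ring
  linarith [div_nonneg (sq_nonneg (|u| - ε * |v|)) hε.le]

section Trace

variable {a b : ℝ}

theorem exists_mem_Icc_mul_le_integral {g : ℝ → ℝ} (hg : Continuous g) (hab : a ≤ b) :
    ∃ y ∈ Icc a b, g y * (b - a) ≤ ∫ r in a..b, g r := by
  obtain ⟨y, hy, hmin⟩ :=
    isCompact_Icc.exists_isMinOn (nonempty_Icc.2 hab) hg.continuousOn
  refine ⟨y, hy, ?_⟩
  have := integral_mono_on (μ := volume) hab (continuous_const.intervalIntegrable a b)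
    (hg.intervalIntegrable a b) fun r hr => hmin hr
  simpa [mul_comm] using this

variable {f : ℝ → ℝ}

theorem sq_sub_sq_le_integral_abs (hf : ContDiff ℝ 1 f) (hab : a ≤ b) {x y : ℝ}
    (hx : x ∈ Icc a b) (hy : y ∈ Icc a b) :
    f x ^ 2 - f y ^ 2 ≤ ∫ r in a..b, |2 * f r * deriv f r| := by
  have hderiv (r : ℝ) : HasDerivAt (fun r => f r ^ 2) (2 * f r * deriv f r) r := by
    simpa [mul_comm] using (hf.differentiable one_ne_zero r).hasDerivAt.fun_pow 2
  have hcont : Continuous fun r => 2 * f r * deriv f r :=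
    (continuous_const.mul hf.continuous).mul (hf.continuous_deriv le_rfl)
  rw [← integral_eq_sub_of_hasDerivAt (fun r _ => hderiv r) (hcont.intervalIntegrable _ _),
    integral_of_le hab]
  calc (∫ r in y..x, 2 * f r * deriv f r)
      ≤ ∫ r in Ι y x, ‖2 * f r * deriv f r‖ :=
        (le_abs_self _).trans (Real.norm_eq_abs _ ▸ norm_integral_le_integral_norm_uIoc)
    _ ≤ ∫ r in Ioc a b, |2 * f r * deriv f r| :=
        setIntegral_mono_set (hcont.abs.integrableOn_Icc.mono_set Ioc_subset_Icc_self)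
          (ae_of_all _ fun _ => abs_nonneg _)
          (Ioc_subset_Ioc (le_min hy.1 hx.1) (max_le hy.2 hx.2)).eventuallyLE

theorem sq_le_integral_sq_add_integral_deriv_sq (hf : ContDiff ℝ 1 f) (hab : a < b)
    {x ε : ℝ} (hx : x ∈ Icc a b) (hε : 0 < ε) :
    f x ^ 2 ≤ (1 / (b - a) + 1 / ε) * (∫ r in a..b, f r ^ 2) +
      ε * ∫ r in a..b, deriv f r ^ 2 := by
  have hf₀ : Continuous fun r => f r ^ 2 := hf.continuous.pow 2
  have hf₁ : Continuous fun r => deriv f r ^ 2 := (hf.continuous_deriv le_rfl).pow 2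
  obtain ⟨y, hy, hfy⟩ := exists_mem_Icc_mul_le_integral hf₀ hab.le
  have hdiff := sq_sub_sq_le_integral_abs hf hab.le hx hy
  have hyoung : (∫ r in a..b, |2 * f r * deriv f r|) ≤
      (1 / ε) * (∫ r in a..b, f r ^ 2) + ε * ∫ r in a..b, deriv f r ^ 2 := by
    rw [← intervalIntegral.integral_const_mul, ← intervalIntegral.integral_const_mul,
      ← integral_add ((hf₀.intervalIntegrable a b).const_mul _)
        ((hf₁.intervalIntegrable a b).const_mul _)]
    refine integral_mono_on hab.le
      ((((continuous_const.mul hf.continuous).mul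
        (hf.continuous_deriv le_rfl)).abs).intervalIntegrable a b)
      (((hf₀.const_mul _).add (hf₁.const_mul _)).intervalIntegrable a b) fun r _ => ?_
    simpa [div_eq_inv_mul] using abs_two_mul_mul_le_div_add_mul hε (f r) (deriv f r)
  have hfy' : f y ^ 2 ≤ 1 / (b - a) * ∫ r in a..b, f r ^ 2 := by
    rw [one_div_mul_eq_div, le_div_iff₀ (sub_pos.2 hab)]
    exact hfy
  linarith

theorem pow_mul_integral_le_integral_mul_pow {g : ℝ → ℝ} (hg : Continuous g)
    (hg₀ : ∀ r, 0 ≤ g r) (ha : 0 ≤ a) (hab : a ≤ b) (k : ℕ) :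
    a ^ k * ∫ r in a..b, g r ≤ ∫ r in a..b, g r * r ^ k := by
  rw [← intervalIntegral.integral_const_mul]
  refine integral_mono_on hab ((hg.intervalIntegrable a b).const_mul _)
    ((hg.mul (continuous_pow k)).intervalIntegrable a b) fun r hr => ?_
  rw [mul_comm]
  exact mul_le_mul_of_nonneg_left (pow_le_pow_left₀ ha hr.1 k) (hg₀ r)

theorem weightedMass_nonneg (k : ℕ) (ha : 0 ≤ a) (hab : a ≤ b) (f : ℝ → ℝ) :
    0 ≤ weightedMass k a b f :=
  integral_nonneg hab fun _ hr => mul_nonneg (sq_nonneg _) (pow_nonneg (ha.trans hr.1) k)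

theorem pow_mul_sq_le_weightedMass (hf : ContDiff ℝ 1 f) (ha : 0 < a) (hab : a < b) (k : ℕ)
    {x ε : ℝ} (hx : x ∈ Icc a b) (hε : 0 < ε) :
    a ^ k * f x ^ 2 ≤
      (1 / (b - a) + 1 / ε) * weightedMass k a b f + ε * weightedMass k a b (deriv f) := by
  have hmass := pow_mul_integral_le_integral_mul_pow (g := fun r => f r ^ 2)
    (hf.continuous.pow 2) (fun r => sq_nonneg (f r)) ha.le hab.le k
  have hmass' := pow_mul_integral_le_integral_mul_pow (g := fun r => deriv f r ^ 2)
    ((hf.continuous_deriv le_rfl).pow 2) (fun r => sq_nonneg (deriv f r)) ha.le hab.le k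
  have hcoef : 0 ≤ 1 / (b - a) + 1 / ε := by
    have := sub_pos.2 hab
    positivity
  calc a ^ k * f x ^ 2
      ≤ a ^ k * ((1 / (b - a) + 1 / ε) * (∫ r in a..b, f r ^ 2) +
          ε * ∫ r in a..b, deriv f r ^ 2) :=
        mul_le_mul_of_nonneg_left (sq_le_integral_sq_add_integral_deriv_sq hf hab hx hε)
          (pow_nonneg ha.le k)
    _ = (1 / (b - a) + 1 / ε) * (a ^ k * ∫ r in a..b, f r ^ 2) +
          ε * (a ^ k * ∫ r in a..b, deriv f r ^ 2) := by ring
    _ ≤ _ := by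
      unfold weightedMass
      gcongr

end Trace

theorem exists_forall_neg_mul_weightedMass_le_robinEnergy (k : ℕ) {a b : ℝ} (α : ℝ)
    (ha : 0 < a) (hab : a < b) :
    ∃ K, ∀ f : ℝ → ℝ, ContDiff ℝ 1 f →
      -K * weightedMass k a b f ≤ robinEnergy k a b α f := by
  have hb : 0 < b := ha.trans hab
  set C := |α| * (1 + b ^ k / a ^ k) with hC
  have hC₀ : 0 ≤ C := by positivity
  set ε := 1 / (C + 1) with hε
  have hε₀ : 0 < ε := by positivity
  have hCε : C * ε ≤ 1 := by
    rw [hε, mul_one_div, div_le_one (by linarith)]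
    linarith
  refine ⟨C * (1 / (b - a) + 1 / ε), fun f hf => ?_⟩
  set T := (1 / (b - a) + 1 / ε) * weightedMass k a b f + ε * weightedMass k a b (deriv f)
  have hfa : a ^ k * f a ^ 2 ≤ T :=
    pow_mul_sq_le_weightedMass hf ha hab k (left_mem_Icc.2 hab.le) hε₀
  have hfb : a ^ k * f b ^ 2 ≤ T :=
    pow_mul_sq_le_weightedMass hf ha hab k (right_mem_Icc.2 hab.le) hε₀
  have hboundary : -(C * T) ≤ α * a ^ k * f a ^ 2 + α * b ^ k * f b ^ 2 := by
    have hfb' : b ^ k * f b ^ 2 ≤ b ^ k / a ^ k * T := by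
      calc b ^ k * f b ^ 2 = b ^ k / a ^ k * (a ^ k * f b ^ 2) := by field_simp
        _ ≤ _ := mul_le_mul_of_nonneg_left hfb (by positivity)
    have hsum : a ^ k * f a ^ 2 + b ^ k * f b ^ 2 ≤ (1 + b ^ k / a ^ k) * T := by linarith
    calc -(C * T) ≤ -(|α| * (a ^ k * f a ^ 2 + b ^ k * f b ^ 2)) := by
          rw [hC, mul_assoc]
          exact neg_le_neg (mul_le_mul_of_nonneg_left hsum (abs_nonneg α))
      _ ≤ α * (a ^ k * f a ^ 2 + b ^ k * f b ^ 2) := by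
          rw [← neg_mul]
          exact mul_le_mul_of_nonneg_right (neg_abs_le α) (by positivity)
      _ = _ := by ring
  have hmass' := weightedMass_nonneg k ha.le hab.le (deriv f)
  have hεmass : C * (ε * weightedMass k a b (deriv f)) ≤ weightedMass k a b (deriv f) := by
    rw [← mul_assoc]
    exact mul_le_of_le_one_left hmass' hCε
  unfold robinEnergy
  linarith

theorem bddBelow_robinQuotients (k : ℕ) {a b : ℝ} (α : ℝ) (ha : 0 < a) (hab : a < b) :
    BddBelow (robinQuotients k a b α) := by
  obtain ⟨K, hK⟩ := exists_forall_neg_mul_weightedMass_le_robinEnergy k α ha hab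
  refine ⟨-K, ?_⟩
  rintro _ ⟨f, hf, hmass, rfl⟩
  rw [le_div_iff₀ ((weightedMass_nonneg k ha.le hab.le f).lt_of_ne' hmass)]
  exact hK f hf

section ExponentialTest

variable {a b α : ℝ}

theorem hasDerivAt_exp_mul_sub (r : ℝ) :
    HasDerivAt (fun r => exp (α * (b - r))) (-α * exp (α * (b - r))) r := by
  have := (((hasDerivAt_id r).const_sub b).const_mul α).exp
  simpa [mul_comm] using this

theorem robinEnergy_exp_mul_sub (k : ℕ) :
    robinEnergy k a b α (fun r => exp (α * (b - r))) =
      α ^ 2 * weightedMass k a b (fun r => exp (α * (b - r))) +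
        α * a ^ k * exp (α * (b - a)) ^ 2 + α * b ^ k := by
  have hderiv : deriv (fun r => exp (α * (b - r))) = fun r => -α * exp (α * (b - r)) :=
    funext fun r => (hasDerivAt_exp_mul_sub r).deriv
  simp only [robinEnergy, weightedMass, hderiv, sub_self, mul_zero, exp_zero, one_pow, mul_one,
    ← intervalIntegral.integral_const_mul]
  congr 2
  refine integral_congr fun r _ => ?_
  ring

theorem natCast_mul_pow_le_mul_pow_sub_one {r : ℝ} (hr : 0 ≤ r) (hrb : r ≤ b) (k : ℕ) :
    (k : ℝ) * r ^ k ≤ b * (k * r ^ (k - 1)) := by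
  rcases k with _ | k
  · simp
  · rw [Nat.add_sub_cancel]
    calc ((k + 1 : ℕ) : ℝ) * r ^ (k + 1) = (k + 1 : ℕ) * r ^ k * r := by ring
      _ ≤ (k + 1 : ℕ) * r ^ k * b := mul_le_mul_of_nonneg_left hrb (by positivity)
      _ = b * ((k + 1 : ℕ) * r ^ k) := by ring

theorem mul_weightedMass_exp_mul_sub_le (k : ℕ) (ha : 0 ≤ a) (hab : a < b) :
    (k / b - 2 * α) * weightedMass k a b (fun r => exp (α * (b - r))) ≤
      b ^ k - a ^ k * exp (α * (b - a)) ^ 2 := by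
  have hb : 0 < b := ha.trans_lt hab
  set E : ℝ → ℝ := fun r => exp (α * (b - r))
  have hE : Continuous E := by fun_prop
  have hderiv (r : ℝ) : HasDerivAt (fun r => E r ^ 2 * r ^ k)
      (2 * E r * (-α * E r) * r ^ k + E r ^ 2 * (k * r ^ (k - 1))) r := by
    refine (((hasDerivAt_exp_mul_sub r).fun_pow 2).fun_mul (hasDerivAt_pow k r)).congr_deriv ?_
    simp only [E]
    ring
  have hmain := integral_le_sub_of_hasDeriv_right_of_le (g := fun r => E r ^ 2 * r ^ k)
    (φ := fun r => (k / b - 2 * α) * (E r ^ 2 * r ^ k)) hab.le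
    ((hE.pow 2).mul (continuous_pow k)).continuousOn (fun r _ => (hderiv r).hasDerivWithinAt)
    ((((hE.pow 2).mul (continuous_pow k)).const_mul (k / b - 2 * α)).integrableOn_Icc)
    fun r hr => ?_
  · have hEb : E b = 1 := by simp [E]
    rw [intervalIntegral.integral_const_mul, hEb, one_pow, one_mul, mul_comm (E a ^ 2)] at hmain
    exact hmain
  have hpow := natCast_mul_pow_le_mul_pow_sub_one (ha.trans hr.1.le) hr.2.le k
  have hpow' : k / b * r ^ k ≤ k * r ^ (k - 1) := by
    rw [div_mul_eq_mul_div, div_le_iff₀ hb]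
    linarith
  linear_combination E r ^ 2 * hpow'

theorem sInf_robinQuotients_lt (k : ℕ) (ha : 0 < a) (hab : a < b) (hα : α < 0) :
    sInf (robinQuotients k a b α) < -α ^ 2 + k / b * α := by
  set E : ℝ → ℝ := fun r => exp (α * (b - r))
  set D := weightedMass k a b E
  have hD : 0 < D :=
    intervalIntegral_pos_of_pos_on ((((by fun_prop : Continuous E).pow 2).mul
      (continuous_pow k)).intervalIntegrable a b)
      (fun r hr => by positivity [ha.trans hr.1]) hab
  have hmem : robinEnergy k a b α E / D ∈ robinQuotients k a b α :=
    ⟨E, by fun_prop, hD.ne', rfl⟩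
  refine (csInf_le (bddBelow_robinQuotients k α ha hab) hmem).trans_lt ?_
  have henergy : robinEnergy k a b α E = α ^ 2 * D + α * a ^ k * E a ^ 2 + α * b ^ k :=
    robinEnergy_exp_mul_sub k
  have hcompare : (k / b - 2 * α) * D ≤ b ^ k - a ^ k * E a ^ 2 :=
    mul_weightedMass_exp_mul_sub_le k ha.le hab
  have hcompare' := mul_le_mul_of_nonpos_left hcompare hα.le
  rw [div_lt_iff₀ hD, henergy]
  have hinner : α * (a ^ k * E a ^ 2) < 0 := mul_neg_of_neg_of_pos hα (by positivity)
  linear_combination hcompare' + 2 * hinner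

end ExponentialTest

theorem lam1Shell_upper_bound_general (d : ℕ) (R₁ R₂ α : ℝ)
    (h₁ : 0 < R₁) (h₁₂ : R₁ < R₂) (hα : α < 0) :
    lam1Shell d R₁ R₂ α < -α ^ 2 + ((d : ℝ) - 1) / R₂ * α := by
  -- `d - 1 : ℕ` truncates to `0` at `d = 0`, where `(d : ℝ) - 1 = -1`
  have hd : (d : ℝ) - 1 ≤ ((d - 1 : ℕ) : ℝ) := by
    rcases d with _ | d <;> simp
  calc lam1Shell d R₁ R₂ α = sInf (robinQuotients (d - 1) R₁ R₂ α) :=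
        lam1Shell_eq_sInf_robinQuotients d R₁ R₂ α
    _ < -α ^ 2 + ((d - 1 : ℕ) : ℝ) / R₂ * α :=
        sInf_robinQuotients_lt (d - 1) h₁ h₁₂ hα
    _ ≤ -α ^ 2 + ((d : ℝ) - 1) / R₂ * α :=
        add_le_add_right (mul_le_mul_of_nonpos_right
          (div_le_div_of_nonneg_right hd (h₁.trans h₁₂).le) hα.le) _

theorem lam1Shell_upper_bound (d : ℕ) (hd : 2 ≤ d) (R₁ R₂ α : ℝ)
    (h₁ : 0 < R₁) (h₁₂ : R₁ < R₂) (hα : α < 0) :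
    lam1Shell d R₁ R₂ α < -α ^ 2 + ((d : ℝ) - 1) / R₂ * α :=
  lam1Shell_upper_bound_general d R₁ R₂ α h₁ h₁₂ hα
end

section
/- Let α < 0. As α → −∞, the first Robin eigenvalue of the interval (−R,R) (with R > 0 fixed) satisfies λ₁^α((−R,R)) = −α² − 4α² e^{2Rα} + o(α² e^{2Rα}). -/
/-!
Picone's identity with the Riccati solution `g x = k tanh (k x)` (so `g' = k² - g²`) gives, for
every trial function `u` on `(-R, R)`,
`∫ u'² + α (u(-R)² + u(R)²) + k² ∫ u² = (k tanh (k R) + α) (u(-R)² + u(R)²) + ∫ (u' - g u)²`.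
Hence `λ₁ ≥ -k²` as soon as `k tanh (k R) ≥ -α`, while `u = cosh (k x)` kills the last square
and gives `λ₁ ≤ -k²` as soon as `k tanh (k R) ≤ -α`. Since
`1 - 2e^{-2x} ≤ tanh x ≤ 1 - 2e^{-2x} + 2e^{-4x}`, for `α ≪ 0` the numbers
`k = -α (1 + 2 (1 ± δ) e^{2Rα})` lie on either side of the root of `k tanh (k R) = -α`, which
pins `λ₁` to `-α² - 4α² e^{2Rα}` up to `8δ α² e^{2Rα}`.
-/

open MeasureTheory intervalIntegral Topology Filter Asymptotics

/-- The first Robin eigenvalue of the interval `(a,b)` with boundary parameter `α`,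
given by the Rayleigh quotient `(∫_a^b u'² + α(u(a)² + u(b)²)) / ∫_a^b u²`. -/
noncomputable def lam1Int (α a b : ℝ) : ℝ :=
  sInf { q : ℝ | ∃ u : ℝ → ℝ, ContDiff ℝ 1 u ∧ (∫ x in a..b, (u x) ^ 2) ≠ 0 ∧
    q = ((∫ x in a..b, (deriv u x) ^ 2) + α * ((u a) ^ 2 + (u b) ^ 2)) /
        (∫ x in a..b, (u x) ^ 2) }

open Real

theorem Real.hasDerivAt_tanh (x : ℝ) : HasDerivAt tanh (1 - tanh x ^ 2) x := by
  have hc : cosh x ≠ 0 := (cosh_pos x).ne'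
  have h := (hasDerivAt_sinh x).div (hasDerivAt_cosh x) hc
  rw [show sinh / cosh = tanh from funext fun y => (tanh_eq_sinh_div_cosh y).symm] at h
  refine h.congr_deriv ?_
  rw [tanh_eq_sinh_div_cosh]
  field_simp

theorem hasDerivAt_mul_tanh_mul (k x : ℝ) :
    HasDerivAt (fun y => k * tanh (k * y)) (k ^ 2 - (k * tanh (k * x)) ^ 2) x := by
  refine (((hasDerivAt_tanh (k * x)).comp x ((hasDerivAt_id x).const_mul k)).const_mul k
    |>.congr_deriv ?_)
  ring

/-- Picone's identity for a solution `g` of the Riccati equation `g' = c - g²`. -/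
theorem integral_deriv_sq_add_mul_sq {u g : ℝ → ℝ} {a b c : ℝ} (hu : ContDiff ℝ 1 u)
    (hg : ∀ x, HasDerivAt g (c - g x ^ 2) x) :
    ∫ x in a..b, (deriv u x ^ 2 + c * u x ^ 2) =
      g b * u b ^ 2 - g a * u a ^ 2 + ∫ x in a..b, (deriv u x - g x * u x) ^ 2 := by
  have hu' : Continuous (deriv u) := hu.continuous_deriv le_rfl
  have hgc : Continuous g := continuous_iff_continuousAt.2 fun x => (hg x).continuousAt
  have hdiff : ∀ x, HasDerivAt (fun y => g y * u y ^ 2)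
      ((c - g x ^ 2) * u x ^ 2 + g x * (2 * u x * deriv u x)) x := fun x =>
    (hg x).mul (((hu.differentiable one_ne_zero x).hasDerivAt.pow 2).congr_deriv (by ring))
  have hcont : Continuous fun x => (c - g x ^ 2) * u x ^ 2 + g x * (2 * u x * deriv u x) := by
    have := hu.continuous; fun_prop
  rw [← integral_eq_sub_of_hasDerivAt (fun x _ => hdiff x) (hcont.intervalIntegrable _ _),
    ← integral_add (hcont.intervalIntegrable _ _)
      ((by have := hu.continuous; fun_prop : Continuous fun x => (deriv u x - g x * u x) ^ 2)
        |>.intervalIntegrable _ _)]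
  congr 1 with x
  ring

noncomputable def robinQuotient (α a b : ℝ) (u : ℝ → ℝ) : ℝ :=
  ((∫ x in a..b, deriv u x ^ 2) + α * (u a ^ 2 + u b ^ 2)) / ∫ x in a..b, u x ^ 2

theorem lam1Int_eq_sInf_image (α a b : ℝ) :
    lam1Int α a b =
      sInf (robinQuotient α a b '' {u | ContDiff ℝ 1 u ∧ (∫ x in a..b, u x ^ 2) ≠ 0}) := by
  simp only [lam1Int, robinQuotient, Set.image, Set.mem_ofPred_eq, and_assoc, eq_comm]

/-- On a symmetric interval the Riccati solution `k tanh (k x)` is odd, so the two boundary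
terms of Picone's identity combine with the Robin term. -/
theorem robin_energy_add_sq_mul_integral (α k R : ℝ) {u : ℝ → ℝ} (hu : ContDiff ℝ 1 u) :
    (∫ x in (-R)..R, deriv u x ^ 2) + α * (u (-R) ^ 2 + u R ^ 2)
        + k ^ 2 * ∫ x in (-R)..R, u x ^ 2 =
      (k * tanh (k * R) + α) * (u (-R) ^ 2 + u R ^ 2)
        + ∫ x in (-R)..R, (deriv u x - k * tanh (k * x) * u x) ^ 2 := by
  have hu' : Continuous (deriv u) := hu.continuous_deriv le_rfl
  have hpicone := integral_deriv_sq_add_mul_sq (a := -R) (b := R) hu (hasDerivAt_mul_tanh_mul k)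
  rw [integral_add (f := fun x => deriv u x ^ 2) (g := fun x => k ^ 2 * u x ^ 2)
    ((hu'.pow 2).intervalIntegrable _ _)
    ((continuous_const.mul (hu.continuous.pow 2)).intervalIntegrable _ _),
    intervalIntegral.integral_const_mul, mul_neg, tanh_neg] at hpicone
  linear_combination hpicone

theorem integral_cosh_mul_sq_pos (k : ℝ) {R : ℝ} (hR : 0 < R) :
    0 < ∫ x in (-R)..R, cosh (k * x) ^ 2 :=
  intervalIntegral_pos_of_pos_on ((by fun_prop : Continuous _).intervalIntegrable _ _)
    (fun x _ => pow_pos (cosh_pos _) 2) (by linarith)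

theorem neg_sq_le_robinQuotient {α k R : ℝ} (hR : 0 ≤ R) (hk : -α ≤ k * tanh (k * R))
    {u : ℝ → ℝ} (hu : ContDiff ℝ 1 u) (hI : (∫ x in (-R)..R, u x ^ 2) ≠ 0) :
    -k ^ 2 ≤ robinQuotient α (-R) R u := by
  have hIpos : 0 < ∫ x in (-R)..R, u x ^ 2 :=
    (integral_nonneg (by linarith) fun x _ => sq_nonneg (u x)).lt_of_ne' hI
  have hsq : 0 ≤ ∫ x in (-R)..R, (deriv u x - k * tanh (k * x) * u x) ^ 2 :=
    integral_nonneg (by linarith) fun x _ => sq_nonneg _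
  have hbdry : 0 ≤ (k * tanh (k * R) + α) * (u (-R) ^ 2 + u R ^ 2) :=
    mul_nonneg (by linarith) (by positivity)
  rw [robinQuotient, le_div_iff₀ hIpos]
  linarith [robin_energy_add_sq_mul_integral α k R hu]

/-- `cosh (k x)` solves `u' = k tanh (k x) u`, so it makes the square in Picone's identity
vanish. -/
theorem robinQuotient_cosh_le_neg_sq {α k R : ℝ} (hR : 0 < R) (hk : k * tanh (k * R) ≤ -α) :
    robinQuotient α (-R) R (fun x => cosh (k * x)) ≤ -k ^ 2 := by
  have hu : ContDiff ℝ 1 fun x => cosh (k * x) := by fun_prop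
  have hderiv : ∀ x, deriv (fun x => cosh (k * x)) x = k * tanh (k * x) * cosh (k * x) := by
    intro x
    have h : HasDerivAt (fun x => cosh (k * x)) (sinh (k * x) * (k * 1)) x :=
      (hasDerivAt_cosh (k * x)).comp x ((hasDerivAt_id x).const_mul k)
    rw [h.deriv, tanh_eq_sinh_div_cosh]
    field_simp [(cosh_pos (k * x)).ne']
  have hIpos := integral_cosh_mul_sq_pos k hR
  have hbdry : (k * tanh (k * R) + α) * (cosh (k * -R) ^ 2 + cosh (k * R) ^ 2) ≤ 0 :=
    mul_nonpos_of_nonpos_of_nonneg (by linarith) (by positivity)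
  have hsq : ∫ x in (-R)..R,
      (deriv (fun x => cosh (k * x)) x - k * tanh (k * x) * cosh (k * x)) ^ 2 = 0 := by
    simp [hderiv]
  have hid := robin_energy_add_sq_mul_integral α k R hu
  rw [hsq] at hid
  rw [robinQuotient, div_le_iff₀ hIpos]
  linarith

theorem lam1Int_mem_Icc {α k₁ k₂ R : ℝ} (hR : 0 < R) (h₁ : -α ≤ k₁ * tanh (k₁ * R))
    (h₂ : k₂ * tanh (k₂ * R) ≤ -α) : lam1Int α (-R) R ∈ Set.Icc (-k₁ ^ 2) (-k₂ ^ 2) := by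
  set S := robinQuotient α (-R) R '' {u | ContDiff ℝ 1 u ∧ (∫ x in (-R)..R, u x ^ 2) ≠ 0}
  have hlower : ∀ q ∈ S, -k₁ ^ 2 ≤ q := by
    rintro _ ⟨u, ⟨hu, hI⟩, rfl⟩
    exact neg_sq_le_robinQuotient hR.le h₁ hu hI
  have hcosh : robinQuotient α (-R) R (fun x => cosh (k₂ * x)) ∈ S :=
    ⟨_, ⟨by fun_prop, (integral_cosh_mul_sq_pos k₂ hR).ne'⟩, rfl⟩
  rw [lam1Int_eq_sInf_image]
  exact ⟨le_csInf ⟨_, hcosh⟩ hlower,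
    (csInf_le ⟨_, hlower⟩ hcosh).trans (robinQuotient_cosh_le_neg_sq hR h₂)⟩

theorem tanh_eq_one_sub_exp_div (x : ℝ) :
    tanh x = (1 - exp (-2 * x)) / (1 + exp (-2 * x)) := by
  rw [tanh_eq, show -2 * x = -x + -x by ring, exp_add, exp_neg]
  field_simp

theorem one_sub_two_mul_exp_le_tanh (x : ℝ) : 1 - 2 * exp (-2 * x) ≤ tanh x := by
  rw [tanh_eq_one_sub_exp_div, le_div_iff₀ (by positivity)]
  nlinarith [sq_nonneg (exp (-2 * x))]

theorem tanh_le_one_sub_two_mul_exp_add_sq (x : ℝ) :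
    tanh x ≤ 1 - 2 * exp (-2 * x) + 2 * exp (-2 * x) ^ 2 := by
  rw [tanh_eq_one_sub_exp_div, div_le_iff₀ (by positivity)]
  nlinarith [pow_pos (exp_pos (-2 * x)) 3]

theorem tendsto_affine_mul_exp_atBot (a b : ℝ) {c : ℝ} (hc : 0 < c) :
    Tendsto (fun α => (a + b * α) * exp (c * α)) atBot (𝓝 0) := by
  have hx : Tendsto (fun α : ℝ => -(c * α)) atBot atTop :=
    tendsto_neg_atBot_atTop.comp (tendsto_id.const_mul_atBot hc)
  have h := ((tendsto_pow_mul_exp_neg_atTop_nhds_zero 0).const_mul a).add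
    ((tendsto_pow_mul_exp_neg_atTop_nhds_zero 1).const_mul (-b / c))
  rw [mul_zero, mul_zero, add_zero] at h
  refine (h.comp hx).congr fun α => ?_
  simp only [Function.comp, pow_zero, pow_one, neg_neg]
  field_simp

/-- The approximation `-α - 2γα e^{2Rα}` of the root `k` of `k tanh (k R) = -α`. -/
noncomputable def approxRoot (R α γ : ℝ) : ℝ := -α * (1 + 2 * γ * exp (2 * R * α))

section approxRoot

variable {R α γ : ℝ}

theorem neg_le_approxRoot (hα : α ≤ 0) (hγ : 0 ≤ γ) : -α ≤ approxRoot R α γ := by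
  unfold approxRoot
  nlinarith [mul_nonneg (mul_nonneg (neg_nonneg.2 hα) hγ) (exp_pos (2 * R * α)).le]

theorem exp_neg_two_mul_approxRoot_le (hR : 0 ≤ R) (hα : α ≤ 0) (hγ : 0 ≤ γ) :
    exp (-2 * (approxRoot R α γ * R)) ≤ exp (2 * R * α) :=
  exp_le_exp.2 (by nlinarith [neg_le_approxRoot (R := R) hα hγ])

theorem neg_le_approxRoot_mul_tanh (hR : 0 ≤ R) (hα : α ≤ 0) (hγ : 0 ≤ γ)
    (h : 2 * γ * exp (2 * R * α) ≤ γ - 1) :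
    -α ≤ approxRoot R α γ * tanh (approxRoot R α γ * R) := by
  set t := exp (2 * R * α)
  have hk := neg_le_approxRoot (R := R) hα hγ
  have htanh : 1 - 2 * t ≤ tanh (approxRoot R α γ * R) :=
    (by linarith [exp_neg_two_mul_approxRoot_le hR hα hγ] : 1 - 2 * t ≤ _).trans
      (one_sub_two_mul_exp_le_tanh _)
  have hprod : 1 ≤ (1 + 2 * γ * t) * (1 - 2 * t) := by
    nlinarith [exp_pos (2 * R * α)]
  calc -α ≤ -α * ((1 + 2 * γ * t) * (1 - 2 * t)) := le_mul_of_one_le_right (by linarith) hprod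
    _ = approxRoot R α γ * (1 - 2 * t) := by rw [approxRoot]; ring
    _ ≤ approxRoot R α γ * tanh (approxRoot R α γ * R) :=
      mul_le_mul_of_nonneg_left htanh (by linarith)

theorem approxRoot_mul_tanh_le_neg (hR : 0 ≤ R) (hα : α ≤ 0) (hγ₀ : 0 ≤ γ) (hγ₁ : γ ≤ 1)
    (h : (1 - 4 * R * α) * exp (2 * R * α) ≤ 1 - γ) :
    approxRoot R α γ * tanh (approxRoot R α γ * R) ≤ -α := by
  set t := exp (2 * R * α)
  set y := exp (-2 * (approxRoot R α γ * R))
  have ht : 0 < t := exp_pos _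
  have hRαt : R * α * t ≤ 0 :=
    mul_nonpos_of_nonpos_of_nonneg (mul_nonpos_of_nonneg_of_nonpos hR hα) ht.le
  have hyt : y ≤ t := exp_neg_two_mul_approxRoot_le hR hα hγ₀
  have hy : t * (1 + 4 * R * α * t) ≤ y := by
    have hsplit : y = t * exp (4 * R * α * γ * t) := by
      simp only [y, t, approxRoot, ← exp_add]; ring_nf
    rw [hsplit]
    refine mul_le_mul_of_nonneg_left ?_ ht.le
    nlinarith [add_one_le_exp (4 * R * α * γ * t)]
  have htanh : tanh (approxRoot R α γ * R) ≤ 1 - 2 * γ * t := by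
    have := tanh_le_one_sub_two_mul_exp_add_sq (approxRoot R α γ * R)
    nlinarith [exp_pos (-2 * (approxRoot R α γ * R))]
  have hk := neg_le_approxRoot (R := R) hα hγ₀
  calc approxRoot R α γ * tanh (approxRoot R α γ * R)
      ≤ approxRoot R α γ * (1 - 2 * γ * t) := mul_le_mul_of_nonneg_left htanh (by linarith)
    _ = -α * (1 - (2 * γ * t) ^ 2) := by rw [approxRoot]; ring
    _ ≤ -α := mul_le_of_le_one_right (by linarith) (by nlinarith)

end approxRoot

theorem abs_lam1Int_sub_le {R α δ : ℝ} (hR : 0 < R) (hα : α ≤ 0) (hδ₀ : 0 ≤ δ) (hδ₁ : δ ≤ 1)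
    (h : (4 - 4 * R * α) * exp (2 * R * α) ≤ δ) :
    |lam1Int α (-R) R - (-α ^ 2 - 4 * α ^ 2 * exp (2 * R * α))|
      ≤ 8 * δ * (α ^ 2 * exp (2 * R * α)) := by
  set t := exp (2 * R * α)
  have ht : 0 < t := exp_pos _
  have hRαt : 0 ≤ -(R * α * t) := by
    have : R * α ≤ 0 := mul_nonpos_of_nonneg_of_nonpos hR.le hα
    nlinarith
  have h₁ := neg_le_approxRoot_mul_tanh (γ := 1 + δ) hR.le hα (by linarith) (by nlinarith)
  have h₂ := approxRoot_mul_tanh_le_neg (γ := 1 - δ) hR.le hα (by linarith) (by linarith)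
    (by nlinarith)
  obtain ⟨hlow, hhigh⟩ := lam1Int_mem_Icc hR h₁ h₂
  have hsq₁ : -approxRoot R α (1 + δ) ^ 2 - (-α ^ 2 - 4 * α ^ 2 * t)
      = -(α ^ 2 * t) * (4 * δ + 4 * (1 + δ) ^ 2 * t) := by rw [approxRoot]; ring
  have hsq₂ : -approxRoot R α (1 - δ) ^ 2 - (-α ^ 2 - 4 * α ^ 2 * t)
      = α ^ 2 * t * (4 * δ - 4 * (1 - δ) ^ 2 * t) := by rw [approxRoot]; ring
  have hα2t : 0 ≤ α ^ 2 * t := by positivity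
  have h4t : 4 * t ≤ δ := by nlinarith
  have hlow' : 4 * δ + 4 * (1 + δ) ^ 2 * t ≤ 8 * δ := by
    nlinarith [mul_le_mul_of_nonneg_right (show (1 + δ) ^ 2 ≤ 4 by nlinarith) ht.le]
  have hhigh' : 4 * δ - 4 * (1 - δ) ^ 2 * t ≤ 8 * δ := by nlinarith
  rw [abs_le]
  constructor
  · nlinarith [mul_le_mul_of_nonneg_left hlow' hα2t]
  · nlinarith [mul_le_mul_of_nonneg_left hhigh' hα2t]

/-- As `α → −∞`, `λ₁^α((−R,R)) = −α² − 4α² e^{2Rα} + o(α² e^{2Rα})`. -/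
theorem lam1Int_deep_asymptotics (R : ℝ) (hR : 0 < R) :
    (fun α : ℝ => lam1Int α (-R) R - (-α ^ 2 - 4 * α ^ 2 * Real.exp (2 * R * α)))
      =o[atBot] (fun α : ℝ => α ^ 2 * Real.exp (2 * R * α)) := by
  refine isLittleO_iff.2 fun c hc => ?_
  set δ := min (c / 8) 1
  have hδ : 0 < δ := lt_min (by positivity) one_pos
  have hsmall : ∀ᶠ α in atBot, (4 - 4 * R * α) * exp (2 * R * α) ≤ δ := by
    simpa only [sub_eq_add_neg, neg_mul] using
      (tendsto_affine_mul_exp_atBot 4 (-(4 * R)) (by positivity : 0 < 2 * R)).eventually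
        (ge_mem_nhds hδ)
  filter_upwards [hsmall, eventually_le_atBot 0] with α hα₁ hα₀
  rw [norm_eq_abs, norm_of_nonneg (by positivity)]
  calc _ ≤ 8 * δ * (α ^ 2 * exp (2 * R * α)) :=
        abs_lam1Int_sub_le hR hα₀ hδ.le (min_le_right _ _) hα₁
    _ ≤ c * (α ^ 2 * exp (2 * R * α)) := by
        gcongr
        linarith [min_le_left (c / 8) 1]
end
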